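/- arXiv:2011.11021 — 5 statements merged into one kernel-verified Lean document; each statement's English description precedes it below -/
import Mathlib

section
/- With α₁ = 3c²h²/(4(12 - c²h²)), for u(x) = sin(cx) the truncation error of the pseudo-bubble scheme equals sin(cx)·[c⁴h²(1/12 - 3/(4(12 - c²h²))) + c⁶h⁴(-1/90 + 3/(16(12 - c²h²)))] + O(c⁸h⁶). -/
/-!
Since `sin (c (x + h)) + sin (c (x - h)) = 2 sin (c x) cos (c h)`, the scheme applied to
`sin (c ·)` is `c² sin (c x)` times a function of `t = c h` that is affine in `cos t`, with
coefficient of order `t⁻²`. Replacing `cos t` by its Taylor polynomial of degree 6 costs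
`O(t⁸ · t⁻²) = O(t⁶)`, and what remains is a rational function that agrees with the claimed
leading term up to `O(t⁶)`.
-/

open Real Filter Asymptotics Topology

lemma Real.cos_sub_taylor_isBigO :
    (fun t : ℝ => cos t - (1 - t ^ 2 / 2 + t ^ 4 / 24 - t ^ 6 / 720)) =O[𝓝 0] (· ^ 8) := by
  have hI : Tendsto (fun t : ℝ => (t : ℂ) * Complex.I) (𝓝 0) (𝓝 0) :=
    Continuous.tendsto' (by fun_prop) 0 0 (by simp)
  have hexp := (Complex.exp_sub_sum_range_isBigO_pow 8).comp_tendsto hI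
  have hre (t : ℝ) : cos t - (1 - t ^ 2 / 2 + t ^ 4 / 24 - t ^ 6 / 720) =
      (Complex.exp (t * Complex.I)
        - ∑ i ∈ Finset.range 8, (t * Complex.I) ^ i / i.factorial).re := by
    simp [Finset.sum_range_succ, Nat.factorial, mul_pow, Complex.exp_ofReal_mul_I_re,
      ← Complex.ofReal_pow]
    ring
  refine (IsBigO.of_bound 1 (Eventually.of_forall fun t => ?_)).trans (hexp.trans ?_)
  · rw [hre, one_mul]
    exact Complex.abs_re_le_norm _
  · exact IsBigO.of_bound 1 (Eventually.of_forall fun t => by simp [mul_pow])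

noncomputable section

def pseudoBubbleAlpha (c h : ℝ) : ℝ := 3 * c ^ 2 * h ^ 2 / (4 * (12 - c ^ 2 * h ^ 2))

def pseudoBubbleScheme (c h : ℝ) (U : ℝ → ℝ) (x : ℝ) : ℝ :=
  -(U (x + h) - 2 * U x + U (x - h)) / h ^ 2 - c ^ 2 * (U (x + h) + 4 * U x + U (x - h)) / 6
    - pseudoBubbleAlpha c h * c ^ 2 * (U (x + h) + 2 * U x + U (x - h)) / 4

def pseudoBubbleSymbol (t : ℝ) : ℝ :=
  2 * (1 - cos t) / t ^ 2 - (cos t + 2) / 3 - 3 * t ^ 2 * (cos t + 1) / (8 * (12 - t ^ 2))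

def pseudoBubbleLeadingTerm (t : ℝ) : ℝ :=
  t ^ 2 * (1 / 12 - 3 / (4 * (12 - t ^ 2))) + t ^ 4 * (-(1 / 90) + 3 / (16 * (12 - t ^ 2)))

end

lemma pseudoBubbleScheme_sin {c h : ℝ} (hc : c ≠ 0) (hh : h ≠ 0) (x : ℝ) :
    pseudoBubbleScheme c h (fun y => sin (c * y)) x =
      c ^ 2 * sin (c * x) * pseudoBubbleSymbol (c * h) := by
  simp only [pseudoBubbleScheme, pseudoBubbleAlpha, pseudoBubbleSymbol, mul_add, mul_sub, sin_add,
    sin_sub]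
  field_simp
  ring

lemma pseudoBubbleSymbol_sub_leadingTerm_isBigO :
    (fun t => pseudoBubbleSymbol t - pseudoBubbleLeadingTerm t) =O[𝓝[≠] 0] (· ^ 6) := by
  set a : ℝ → ℝ := fun t => 1 / 2160 - 1 / (64 * (12 - t ^ 2)) + t ^ 2 / (1920 * (12 - t ^ 2))
  set b : ℝ → ℝ := fun t => -2 - t ^ 2 / 3 - 3 * t ^ 4 / (8 * (12 - t ^ 2))
  have ha : a =O[𝓝[≠] 0] (fun _ => (1 : ℝ)) :=
    ((show ContinuousAt a 0 by fun_prop (disch := norm_num)).tendsto.isBigO_one ℝ).mono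
      nhdsWithin_le_nhds
  have hb : b =O[𝓝[≠] 0] (fun _ => (1 : ℝ)) :=
    ((show ContinuousAt b 0 by fun_prop (disch := norm_num)).tendsto.isBigO_one ℝ).mono
      nhdsWithin_le_nhds
  have hdecomp : ∀ᶠ t in 𝓝[≠] 0, t ^ 6 * a t
      + (cos t - (1 - t ^ 2 / 2 + t ^ 4 / 24 - t ^ 6 / 720)) * (t ^ 2)⁻¹ * b t
      = pseudoBubbleSymbol t - pseudoBubbleLeadingTerm t := by
    filter_upwards [self_mem_nhdsWithin] with t (ht : t ≠ 0)
    simp only [a, b, pseudoBubbleSymbol, pseudoBubbleLeadingTerm]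
    field_simp
    ring
  have hpoly : (fun t => t ^ 6 * a t) =O[𝓝[≠] 0] (· ^ 6) := by
    simpa using (isBigO_refl (· ^ 6) _).mul ha
  have hcos : (fun t => (cos t - (1 - t ^ 2 / 2 + t ^ 4 / 24 - t ^ 6 / 720)) * (t ^ 2)⁻¹ * b t)
      =O[𝓝[≠] 0] (· ^ 6) := by
    refine (((Real.cos_sub_taylor_isBigO.mono nhdsWithin_le_nhds).mul (isBigO_refl _ _)).mul
      hb).congr_right fun t => ?_
    rcases eq_or_ne t 0 with rfl | ht
    · simp
    · field_simp
  exact (hpoly.add hcos).congr' hdecomp EventuallyEq.rfl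

/-- Truncation error of the pseudo-bubble scheme with α₁ = 3c²h²/(4(12-c²h²))
for u(x) = sin(cx). -/
theorem stmt4 (c x : ℝ) (hc : 0 < c) :
    (fun h : ℝ =>
        (-(Real.sin (c * (x + h)) - 2 * Real.sin (c * x) + Real.sin (c * (x - h))) / h ^ 2
          - c ^ 2 * (Real.sin (c * (x + h)) + 4 * Real.sin (c * x)
              + Real.sin (c * (x - h))) / 6
          - (3 * c ^ 2 * h ^ 2 / (4 * (12 - c ^ 2 * h ^ 2))) * c ^ 2
              * (Real.sin (c * (x + h)) + 2 * Real.sin (c * x)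
                  + Real.sin (c * (x - h))) / 4)
        - Real.sin (c * x) *
            (c ^ 4 * h ^ 2 * (1 / 12 - 3 / (4 * (12 - c ^ 2 * h ^ 2)))
              + c ^ 6 * h ^ 4 * (-(1 / 90) + 3 / (16 * (12 - c ^ 2 * h ^ 2)))))
      =O[nhdsWithin 0 (Set.Ioi 0)] (fun h : ℝ => c ^ 8 * h ^ 6) := by
  have hscale : Tendsto (fun h => c * h) (𝓝[>] 0) (𝓝[≠] 0) :=
    tendsto_nhdsWithin_iff.2
      ⟨Continuous.tendsto' (by fun_prop) 0 0 (mul_zero c) |>.mono_left nhdsWithin_le_nhds,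
        eventually_nhdsWithin_of_forall fun h (hh : 0 < h) => (mul_pos hc hh).ne'⟩
  have hsymbol := ((isBigO_refl (fun _ => c ^ 2) _).mul
    (pseudoBubbleSymbol_sub_leadingTerm_isBigO.comp_tendsto hscale)).const_mul_left (sin (c * x))
  refine hsymbol.congr' ?_ (Eventually.of_forall fun h => by simp only [Function.comp]; ring)
  filter_upwards [self_mem_nhdsWithin] with h (hh : 0 < h)
  change _ = pseudoBubbleScheme c h (fun y => sin (c * y)) x - _
  rw [pseudoBubbleScheme_sin hc.ne' hh.ne']
  simp only [Function.comp, pseudoBubbleLeadingTerm]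
  ring
end

section
/- If 0 < ch < √(15/2) and c²h² ≠ 12, then |1/12 - 3/(4(12 - c²h²))| < 1/12; that is, the coefficient of c⁴h² in the pseudo-bubble truncation error is strictly smaller in magnitude than the coefficient 1/12 arising in the standard Galerkin scheme. -/
open Real

/-- For 0 < ch < √(15/2), the pseudo-bubble c⁴h² coefficient is smaller in
magnitude than the standard Galerkin coefficient 1/12. -/
theorem stmt5 (c h : ℝ) (hc : 0 < c) (hh : 0 < h)
    (hch : c * h < Real.sqrt (15 / 2)) (hne : c ^ 2 * h ^ 2 ≠ 12) :
    |1 / 12 - 3 / (4 * (12 - c ^ 2 * h ^ 2))| < (1 : ℝ) / 12 := by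
  have hpos : 0 < c * h := mul_pos hc hh
  have hx : c ^ 2 * h ^ 2 < 15 / 2 := by
    have h1 : (c * h) ^ 2 < Real.sqrt (15 / 2) ^ 2 :=
      pow_lt_pow_left₀ hch hpos.le two_ne_zero
    have h2 : Real.sqrt (15 / 2) ^ 2 = 15 / 2 :=
      Real.sq_sqrt (by norm_num)
    nlinarith
  have ht : (9 : ℝ) / 2 < 12 - c ^ 2 * h ^ 2 := by linarith
  have ht0 : (0 : ℝ) < 4 * (12 - c ^ 2 * h ^ 2) := by linarith
  rw [abs_lt]
  constructor
  · have : 3 / (4 * (12 - c ^ 2 * h ^ 2)) < 1 / 6 := by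
      rw [div_lt_div_iff₀ ht0 (by norm_num)]
      linarith
    linarith
  · have : 0 < 3 / (4 * (12 - c ^ 2 * h ^ 2)) := by positivity
    linarith
end

section
/- If 0 < ch < √(57/16), then |−1/90 + 3/(16(12 − c²h²))| < 1/90; i.e., the coefficient of c⁶h⁴ in the pseudo-bubble truncation error is strictly smaller in magnitude than the corresponding coefficient 1/90 of the standard Galerkin scheme. -/
open Real

/-- For 0 < ch < √(57/16), the pseudo-bubble c⁶h⁴ coefficient is smaller in
magnitude than the standard Galerkin coefficient 1/90. -/
theorem stmt7 (c h : ℝ) (hc : 0 < c) (hh : 0 < h)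
    (hch : c * h < Real.sqrt (57 / 16)) :
    |(-(1 / 90) + 3 / (16 * (12 - c ^ 2 * h ^ 2)) : ℝ)| < (1 : ℝ) / 90 := by
  have hx : c ^ 2 * h ^ 2 < 57 / 16 := by
    have := Real.sq_sqrt (by norm_num : (57:ℝ)/16 ≥ 0)
    nlinarith [mul_pos hc hh, Real.sqrt_nonneg ((57:ℝ)/16)]
  have hxpos : 0 < c ^ 2 * h ^ 2 := by positivity
  have hd : (0:ℝ) < 16 * (12 - c ^ 2 * h ^ 2) := by nlinarith
  rw [abs_lt]
  constructor
  · have : (0:ℝ) < 3 / (16 * (12 - c ^ 2 * h ^ 2)) := by positivity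
    linarith
  · have : 3 / (16 * (12 - c ^ 2 * h ^ 2)) < 2 / 90 := by
      rw [div_lt_iff₀ hd]; nlinarith
    linarith
end

section
/- The coefficient C₁ = (30240 − 483840·α₂/(c²h²))/(322560√3) vanishes for all c, h > 0 if and only if α₂ = (1/16)c²h² = 0.0625c²h²; with this choice the seven-point hexagonal scheme is fourth-order accurate for plane waves. -/
open Real

/-- The coefficient C₁ of the seven-point hexagonal scheme vanishes for all
c, h > 0 iff α₂ = 0.0625 c²h²; this is the fourth-order choice. -/
theorem stmt11 (α₂ : ℝ → ℝ → ℝ) :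
    (∀ c h : ℝ, 0 < c → 0 < h →
        (30240 - 483840 * α₂ c h / (c ^ 2 * h ^ 2)) / (322560 * Real.sqrt 3) = 0)
      ↔ (∀ c h : ℝ, 0 < c → 0 < h → α₂ c h = 0.0625 * c ^ 2 * h ^ 2) := by
  have hs : Real.sqrt 3 ≠ 0 := by positivity
  constructor <;> intro H c h hc hh <;> have h1 := H c h hc hh <;>
    have hne : c ^ 2 * h ^ 2 ≠ 0 := by positivity
  · rw [div_eq_zero_iff] at h1
    rcases h1 with h1 | h1
    · field_simp at h1; linarith
    · exfalso; have : (322560 : ℝ) * Real.sqrt 3 ≠ 0 := by positivity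
      exact this h1
  · rw [h1]; field_simp; ring
end

section
/- With α₂ = 2μc²h²/(3(72 − c²h²)) and μ = 27/5 (i.e., μ = 5.4), the coefficient C₁ = (30240 − 483840·α₂/(c²h²))/(322560√3) tends to (30240 − 483840·(2·27/5)/(3·72))/(322560√3) = (30240 − 24192)/(322560√3) = 6048/(322560√3) as ch → 0, which is strictly smaller in magnitude than the standard Galerkin value 30240/(322560√3); hence for small ch the adapted-bubble choice μ = 5.4 reduces the leading pollution coefficient by a factor of 5. -/
open Real Filter Topology

/-- `α₂ / (c²h²)` with `t = c²h²`; once `t` cancels it is continuous at `0`, with value `2μ/216`. -/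
theorem tendsto_bubble_ratio (μ : ℝ) :
    Tendsto (fun t : ℝ => 2 * μ * t / (3 * (72 - t)) / t) (𝓝[≠] 0) (𝓝 (μ / 108)) := by
  have hcont : ContinuousAt (fun t : ℝ => 2 * μ / (3 * (72 - t))) 0 := by
    fun_prop (disch := norm_num)
  have hlim : Tendsto (fun t : ℝ => 2 * μ / (3 * (72 - t))) (𝓝[≠] 0) (𝓝 (μ / 108)) := by
    convert hcont.tendsto.mono_left nhdsWithin_le_nhds using 2
    ring
  refine hlim.congr' ?_
  filter_upwards [self_mem_nhdsWithin] with t (ht : t ≠ 0)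
  rw [div_div, mul_div_mul_right _ _ ht]

/-- With α₂ = 2μc²h²/(3(72 - c²h²)) and μ = 27/5, the coefficient C₁ tends to
6048/(322560√3) as c²h² → 0⁺, which is five times smaller in magnitude than
the standard Galerkin value 30240/(322560√3). -/
theorem stmt17 :
    Tendsto
      (fun t : ℝ =>
        (30240 - 483840 * (2 * (27 / 5) * t / (3 * (72 - t)) / t))
          / (322560 * Real.sqrt 3))
      (nhdsWithin 0 (Set.Ioi 0))
      (nhds (6048 / (322560 * Real.sqrt 3))) ∧
    |(6048 : ℝ) / (322560 * Real.sqrt 3)| < |(30240 : ℝ) / (322560 * Real.sqrt 3)| ∧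
    (30240 : ℝ) / (322560 * Real.sqrt 3)
      = 5 * (6048 / (322560 * Real.sqrt 3)) := by
  refine ⟨?_, ?_, by ring⟩
  · have hratio := (tendsto_bubble_ratio (27 / 5)).mono_left (nhdsGT_le_nhdsNE 0)
    convert ((hratio.const_mul 483840).const_sub 30240).div_const (322560 * √3) using 2
    norm_num
  · rw [abs_div, abs_div]
    gcongr
    norm_num
end
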